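/- Let S(α) = ∑_{n∈ℤ} cₙ e(nα) with ∑|cₙ| < ∞, and let H be a positive integer. Then ∫₀¹ |S(α)|² K(α,H) dα = (1/H) ∫_{-∞}^{∞} |∑_{x<n<x+H} cₙ|² dx, where K(α,H) = ∑_{|n|≤H}(1-|n|/H)e(nα) is the Fejér kernel. -/

import Mathlib

open MeasureTheory Finset intervalIntegral

noncomputable def e (u : ℝ) : ℂ := Complex.exp (2 * Real.pi * Complex.I * u)

/-- `S(α) = ∑_{n ∈ ℤ} cₙ e(nα)`. -/
noncomputable def S (c : ℤ → ℂ) (α : ℝ) : ℂ := ∑' n : ℤ, c n * e (n * α)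

/-- The Fejér kernel `K(α, H) = ∑_{|n| ≤ H} (1 - |n|/H) e(nα)`. -/
noncomputable def K (α : ℝ) (H : ℕ) : ℂ :=
  ∑ n ∈ Finset.Icc (-(H : ℤ)) (H : ℤ), ((1 - (|n| : ℝ) / H : ℝ) : ℂ) * e (n * α)

/-!
Both sides expand, by absolute convergence, into `∑_{m,n} cₘ c̄ₙ w(m - n)` with
`w(d) = max (1 - |d|/H) 0`. On the left, `w(d)` is the `d`-th Fourier coefficient of the Fejér
kernel; on the right, `H w(m - n)` is the length of the set of `x` with `m, n ∈ (x, x + H)`.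
-/

open ComplexConjugate

lemma norm_e (u : ℝ) : ‖e u‖ = 1 := by
  simp [e, Complex.norm_exp, mul_comm]

lemma e_add (u v : ℝ) : e (u + v) = e u * e v := by
  simp only [e, Complex.ofReal_add, mul_add, Complex.exp_add]

lemma e_mul_conj_e (u v : ℝ) : e u * conj (e v) = e (u - v) := by
  rw [sub_eq_add_neg, e_add, e, e, e, ← Complex.exp_conj]
  simp [Complex.conj_ofNat]

@[fun_prop]
lemma continuous_e : Continuous e := by
  unfold e; fun_prop

lemma integral_e_intCast_mul (k : ℤ) :
    ∫ α in (0:ℝ)..1, e (k * α) = if k = 0 then 1 else 0 := by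
  split_ifs with hk
  · simp [hk, e]
  have hc : 2 * Real.pi * Complex.I * k ≠ 0 := by simp [Real.pi_ne_zero, hk]
  simp only [e, Complex.ofReal_mul, Complex.ofReal_intCast, ← mul_assoc]
  rw [integral_exp_mul_complex hc, Complex.ofReal_one, Complex.ofReal_zero, mul_zero, mul_one,
    mul_comm _ (k : ℂ), Complex.exp_int_mul_two_pi_mul_I, Complex.exp_zero, sub_self, zero_div]

lemma ofReal_norm_tsum_sq {ι : Type*} {a : ι → ℂ} (ha : Summable fun i => ‖a i‖) :
    ((‖∑' i, a i‖ ^ 2 : ℝ) : ℂ) = ∑' p : ι × ι, a p.1 * conj (a p.2) := by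
  have ha' : Summable fun i => ‖conj (a i)‖ := by simpa using ha
  rw [Complex.ofReal_pow, ← Complex.mul_conj', Complex.conj_tsum,
    tsum_mul_tsum_of_summable_norm ha ha']

lemma integral_tsum_of_integral_norm_le {X ι E : Type*} [MeasurableSpace X] [Countable ι]
    [NormedAddCommGroup E] [NormedSpace ℝ E] {μ : Measure X} {F : ι → X → E}
    (hF : ∀ i, Integrable (F i) μ) {b : ι → ℝ} (hb : Summable b)
    (hle : ∀ i, ∫ x, ‖F i x‖ ∂μ ≤ b i) :
    ∫ x, ∑' i, F i x ∂μ = ∑' i, ∫ x, F i x ∂μ :=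
  (integral_tsum_of_summable_integral_norm hF
    (hb.of_nonneg_of_le (fun _ => integral_nonneg fun _ => norm_nonneg _) hle)).symm

lemma integral_e_mul_K {H : ℕ} (hH : 0 < H) (d : ℤ) :
    ∫ α in (0:ℝ)..1, e (d * α) * K α H = ((max (1 - |(d : ℝ)| / H) 0 : ℝ) : ℂ) := by
  have hK : ∀ α : ℝ, e (d * α) * K α H
      = ∑ n ∈ Icc (-(H : ℤ)) H, ((1 - (|n| : ℝ) / H : ℝ) : ℂ) * e ((d + n : ℤ) * α) := by
    intro α
    rw [K, Finset.mul_sum]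
    refine Finset.sum_congr rfl fun n _ => ?_
    rw [mul_left_comm, ← e_add]
    push_cast; ring_nf
  simp_rw [hK]
  rw [integral_finsetSum fun n _ => (by fun_prop : Continuous _).intervalIntegrable _ _]
  simp_rw [intervalIntegral.integral_const_mul, integral_e_intCast_mul, mul_ite, mul_zero, mul_one,
    add_eq_zero_iff_neg_eq, Finset.sum_ite_eq, Finset.mem_Icc]
  have hH' : (0 : ℝ) < H := by exact_mod_cast hH
  rcases le_or_gt |d| H with hd | hd
  · have hd' : |(d : ℝ)| ≤ H := by exact_mod_cast hd
    rw [if_pos (by rw [abs_le] at hd; omega),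
      max_eq_left (by rw [sub_nonneg, div_le_one hH']; exact hd')]
    simp
  · have hd' : (H : ℝ) < |(d : ℝ)| := by exact_mod_cast hd
    rw [if_neg (by rw [lt_abs] at hd; omega),
      max_eq_right (by rw [sub_nonpos, one_le_div hH']; exact hd'.le)]
    simp

lemma integral_indicator_Ioo_inter_Ioo {E : Type*} [NormedAddCommGroup E] [NormedSpace ℝ E]
    [CompleteSpace E] (L a b : ℝ) (z : E) :
    ∫ x, (Set.Ioo (a - L) a ∩ Set.Ioo (b - L) b).indicator (fun _ => z) x
      = max (L - |a - b|) 0 • z := by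
  rw [integral_indicator_const _ (measurableSet_Ioo.inter measurableSet_Ioo), Set.Ioo_inter_Ioo,
    Real.volume_real_Ioo, max_sub_sub_right, abs_sub_comm, ← max_sub_min_eq_abs]
  ring_nf

section

variable {c : ℤ → ℂ} (hc : Summable fun n => ‖c n‖)
include hc

lemma summable_norm_mul_norm : Summable fun p : ℤ × ℤ => ‖c p.1‖ * ‖c p.2‖ := by
  simpa using hc.mul_norm hc

lemma integral_norm_S_sq_mul {μ : Measure ℝ} {g : ℝ → ℂ} (hg : Integrable g μ) :
    ∫ α, ((‖S c α‖ ^ 2 : ℝ) : ℂ) * g α ∂μ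
      = ∑' p : ℤ × ℤ, c p.1 * conj (c p.2) * ∫ α, e ((p.1 - p.2 : ℤ) * α) * g α ∂μ := by
  have hterm : ∀ p : ℤ × ℤ, Integrable (fun α => e ((p.1 - p.2 : ℤ) * α) * g α) μ := fun p =>
    hg.bdd_mul (by fun_prop) (.of_forall fun α => (norm_e _).le)
  have hS : ∀ α, ((‖S c α‖ ^ 2 : ℝ) : ℂ) * g α
      = ∑' p : ℤ × ℤ, c p.1 * conj (c p.2) * (e ((p.1 - p.2 : ℤ) * α) * g α) := by
    intro α
    rw [S, ofReal_norm_tsum_sq (by simpa [norm_e] using hc), ← tsum_mul_right]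
    congr 1 with p
    rw [map_mul, mul_mul_mul_comm, e_mul_conj_e]
    push_cast; ring_nf
  simp_rw [hS, ← MeasureTheory.integral_const_mul]
  refine integral_tsum_of_integral_norm_le (fun p => (hterm p).const_mul _)
    ((summable_norm_mul_norm hc).mul_right (∫ α, ‖g α‖ ∂μ)) fun p => ?_
  simp [norm_e, MeasureTheory.integral_const_mul]

lemma integral_norm_window_sum_sq (L : ℝ) :
    ∫ x, ((‖∑' n : ℤ, if x < (n : ℝ) ∧ (n : ℝ) < x + L then c n else 0‖ ^ 2 : ℝ) : ℂ)
      = ∑' p : ℤ × ℤ, c p.1 * conj (c p.2) * ((max (L - |(p.1 : ℝ) - p.2|) 0 : ℝ) : ℂ) := by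
  set s : ℤ → Set ℝ := fun n => Set.Ioo (n - L) n
  have hs : ∀ p : ℤ × ℤ, MeasurableSet (s p.1 ∩ s p.2) := fun _ =>
    measurableSet_Ioo.inter measurableSet_Ioo
  have hwin : ∀ (x : ℝ) (n : ℤ),
      (if x < (n : ℝ) ∧ (n : ℝ) < x + L then c n else 0) = (s n).indicator (fun _ => c n) x := by
    intro x n
    simp only [s, Set.indicator_apply, Set.mem_Ioo]
    congr 1
    exact propext ⟨fun h => ⟨by linarith, h.1⟩, fun h => ⟨h.2, by linarith⟩⟩
  have hsq : ∀ x : ℝ,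
      ((‖∑' n : ℤ, if x < (n : ℝ) ∧ (n : ℝ) < x + L then c n else 0‖ ^ 2 : ℝ) : ℂ)
        = ∑' p : ℤ × ℤ, (s p.1 ∩ s p.2).indicator (fun _ => c p.1 * conj (c p.2)) x := by
    intro x
    simp_rw [hwin]
    rw [ofReal_norm_tsum_sq (a := fun n => (s n).indicator (fun _ => c n) x)
      (hc.of_nonneg_of_le (fun _ => norm_nonneg _) fun n => norm_indicator_le_norm_self _ _)]
    congr 1 with p
    simp only [Set.indicator_apply, Set.mem_inter_iff]
    split_ifs <;> simp_all
  simp_rw [hsq]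
  rw [integral_tsum_of_integral_norm_le
    (fun p => (integrableOn_const (measure_ne_top_of_subset Set.inter_subset_left
      measure_Ioo_lt_top.ne)).integrable_indicator (hs p))
    ((summable_norm_mul_norm hc).mul_left (max L 0)) fun p => ?_]
  · congr 1 with p
    rw [integral_indicator_Ioo_inter_Ioo, Complex.real_smul, mul_comm]
  · simp_rw [norm_indicator_eq_indicator_norm]
    rw [integral_indicator_Ioo_inter_Ioo, smul_eq_mul, norm_mul, Complex.norm_conj]
    gcongr
    linarith [abs_nonneg ((p.1 : ℝ) - p.2)]

end

theorem fejer_smoothed_identity (c : ℤ → ℂ) (hc : Summable fun n => ‖c n‖)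
    (H : ℕ) (hH : 0 < H) :
    ∫ α in (0:ℝ)..1, ((‖S c α‖ ^ 2 : ℝ) : ℂ) * K α H
      = (((1 / H) * ∫ x : ℝ, ‖∑' n : ℤ, if x < (n : ℝ) ∧ (n : ℝ) < x + H then c n else 0‖ ^ 2 :
          ℝ) : ℂ) := by
  have hK : Continuous fun α => K α H := by unfold K; fun_prop
  rw [integral_of_le zero_le_one, integral_norm_S_sq_mul hc hK.integrableOn_Ioc,
    Complex.ofReal_mul, ← integral_complex_ofReal, integral_norm_window_sum_sq hc,
    ← tsum_mul_left]
  congr 1 with p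
  rw [← integral_of_le zero_le_one, integral_e_mul_K hH, mul_left_comm, ← Complex.ofReal_mul,
    mul_max_of_nonneg _ _ (by positivity), mul_zero, mul_sub, one_div_mul_cancel (by positivity)]
  push_cast
  ring_nf
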